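/- For any m-bit random variable Z, the squared L1 distance of Z from the uniform distribution on m bits is at most the sum over all nonzero S ∈ {0,1}^m of the squared L1 distance of the parity bit S·Z from the uniform distribution on one bit. -/

import Mathlib

open scoped Kronecker ComplexOrder
open Matrix BigOperators

/-- Schatten-1 norm `‖A‖₁ = Tr √(AᴴA)`. -/
noncomputable def trNorm {n m : Type*} [Fintype n] [Fintype m] [DecidableEq m] (A : Matrix n m ℂ) : ℝ :=
  (((Matrix.posSemidef_conjTranspose_mul_self A).1.eigenvectorUnitary.1 *
    diagonal ((fun x : ℝ => (x : ℂ)) ∘ Real.sqrt ∘ (Matrix.posSemidef_conjTranspose_mul_self A).1.eigenvalues) *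
    (star (Matrix.posSemidef_conjTranspose_mul_self A).1.eigenvectorUnitary : Matrix m m ℂ)).trace).re

/-- Trace distance `(1/2)‖A − B‖₁`. -/
noncomputable def trDist {n : Type*} [Fintype n] [DecidableEq n] (A B : Matrix n n ℂ) : ℝ :=
  (1/2) * trNorm (A - B)

/-- `ρ` is a density matrix. -/
def IsDensity {n : Type*} [Fintype n] (ρ : Matrix n n ℂ) : Prop :=
  ρ.PosSemidef ∧ ρ.trace = 1

/-! Cauchy–Schwarz bounds the squared L1 distance of `p` from uniform by `2^m` times its squared
L2 distance, which by Parseval is the sum of the squared Walsh coefficients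
`∑ z, (-1)^(S ⬝ᵥ z) (p z - 2^(-m))`. The coefficient at `S = 0` vanishes since `p` has total
mass one, and for `S ≠ 0` it equals `Pr[S ⬝ᵥ Z = 0] - Pr[S ⬝ᵥ Z = 1]`, whose absolute value is
the L1 distance of the bit `S ⬝ᵥ Z` from uniform. -/

noncomputable def parityChar : AddChar (ZMod 2) ℝ :=
  AddChar.zmodChar 2 (by norm_num : (-1 : ℝ) ^ 2 = 1)

lemma parityChar_one : parityChar 1 = -1 := by
  simp [parityChar, AddChar.zmodChar_apply, ZMod.val_one]

lemma sum_parityChar_mul {α : Type*} [Fintype α] (g : α → ZMod 2) (p : α → ℝ) :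
    ∑ z, parityChar (g z) * p z = ∑ z with g z = 0, p z - ∑ z with g z = 1, p z := by
  simp only [Finset.sum_filter, ← Finset.sum_sub_distrib]
  refine Finset.sum_congr rfl fun z _ => ?_
  rcases (by decide : ∀ b : ZMod 2, b = 0 ∨ b = 1) (g z) with h | h <;> simp [h, parityChar_one]

section Walsh

variable {ι : Type*} [Fintype ι]

noncomputable def walshChar (S : ι → ZMod 2) : AddChar (ι → ZMod 2) ℝ where
  toFun z := parityChar (S ⬝ᵥ z)
  map_zero_eq_one' := by simp
  map_add_eq_mul' x y := by simp [dotProduct_add, AddChar.map_add_eq_mul]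

lemma walshChar_apply (S z : ι → ZMod 2) : walshChar S z = parityChar (S ⬝ᵥ z) := rfl

lemma walshChar_comm (S z : ι → ZMod 2) : walshChar S z = walshChar z S := by
  simp only [walshChar_apply, dotProduct_comm]

variable [DecidableEq ι]

lemma walshChar_eq_zero_iff {S : ι → ZMod 2} : walshChar S = 0 ↔ S = 0 := by
  refine ⟨fun h => ?_, fun h => by ext z; simp [h, walshChar_apply]⟩
  by_contra hS
  obtain ⟨i, hi⟩ := Function.ne_iff.mp hS
  have hSi : S i = 1 := (by decide : ∀ b : ZMod 2, b ≠ 0 → b = 1) _ hi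
  have : walshChar S (Pi.single i 1) = -1 := by
    rw [walshChar_apply, dotProduct_single, mul_one, hSi, parityChar_one]
  rw [h] at this
  norm_num at this

lemma sum_walshChar (S : ι → ZMod 2) :
    ∑ z, walshChar S z = if S = 0 then (2 : ℝ) ^ Fintype.card ι else 0 := by
  rw [AddChar.sum_eq_ite]
  simp [walshChar_eq_zero_iff]

noncomputable def walshTransform (f : (ι → ZMod 2) → ℝ) (S : ι → ZMod 2) : ℝ :=
  ∑ z, walshChar S z * f z

lemma walshTransform_zero (f : (ι → ZMod 2) → ℝ) : walshTransform f 0 = ∑ z, f z := by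
  simp [walshTransform, walshChar_eq_zero_iff.mpr]

lemma walshTransform_sub_const {S : ι → ZMod 2} (hS : S ≠ 0) (f : (ι → ZMod 2) → ℝ) (c : ℝ) :
    walshTransform (fun z => f z - c) S = walshTransform f S := by
  simp only [walshTransform, mul_sub, Finset.sum_sub_distrib, ← Finset.sum_mul, sum_walshChar,
    if_neg hS, zero_mul, sub_zero]

lemma sum_sq_walshTransform (f : (ι → ZMod 2) → ℝ) :
    ∑ S, walshTransform f S ^ 2 = 2 ^ Fintype.card ι * ∑ z, f z ^ 2 := by
  have expand (S : ι → ZMod 2) :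
      walshTransform f S ^ 2 = ∑ z, ∑ w, walshChar (z + w) S * (f z * f w) := by
    rw [walshTransform, sq, Finset.sum_mul_sum]
    refine Finset.sum_congr rfl fun z _ => Finset.sum_congr rfl fun w _ => ?_
    rw [walshChar_comm (z + w), AddChar.map_add_eq_mul]
    ring
  have add_eq_zero (z w : ι → ZMod 2) : z + w = 0 ↔ z = w := by
    rw [add_eq_zero_iff_eq_neg, ZModModule.neg_eq_self]
  calc ∑ S, walshTransform f S ^ 2
      = ∑ z, ∑ w, (∑ S, walshChar (z + w) S) * (f z * f w) := by
        simp_rw [expand, Finset.sum_mul]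
        rw [Finset.sum_comm]
        exact Finset.sum_congr rfl fun z _ => Finset.sum_comm
    _ = ∑ z, 2 ^ Fintype.card ι * f z ^ 2 := by
        simp [sum_walshChar, add_eq_zero, sq]
    _ = 2 ^ Fintype.card ι * ∑ z, f z ^ 2 := (Finset.mul_sum ..).symm

end Walsh

lemma abs_sub_half_add_abs_sub_half {a b : ℝ} (h : a + b = 1) :
    |a - 2⁻¹| + |b - 2⁻¹| = |a - b| := by
  rw [show a - 2⁻¹ = (a - b) / 2 by linarith, show b - 2⁻¹ = -((a - b) / 2) by linarith,
    abs_neg, abs_div, abs_two]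
  ring

lemma sum_abs_fiber_sub_half {α : Type*} [Fintype α] (g : α → ZMod 2) {p : α → ℝ}
    (hp : ∑ z, p z = 1) :
    ∑ b, |∑ z with g z = b, p z - 2⁻¹| = |∑ z, parityChar (g z) * p z| := by
  have hfibers : ∑ z with g z = 0, p z + ∑ z with g z = 1, p z = 1 := by
    rw [← hp, ← Finset.sum_fiberwise Finset.univ g p]
    -- `ZMod 2` is definitionally `Fin 2`
    exact (Fin.sum_univ_two fun b : ZMod 2 => ∑ z with g z = b, p z).symm
  rw [sum_parityChar_mul, ← abs_sub_half_add_abs_sub_half hfibers]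
  exact Fin.sum_univ_two fun b : ZMod 2 => |∑ z with g z = b, p z - 2⁻¹|

theorem stmt1_general (m : ℕ) (p : (Fin m → ZMod 2) → ℝ) (hsum : ∑ z, p z = 1) :
    (∑ z, |p z - ((2:ℝ)^m)⁻¹|)^2 ≤
      ∑ S ∈ Finset.univ.filter (fun S : Fin m → ZMod 2 => S ≠ 0),
        (∑ b : ZMod 2, |(∑ z ∈ Finset.univ.filter (fun z : Fin m → ZMod 2 => S ⬝ᵥ z = b), p z)
            - 2⁻¹|)^2 := by
  set q : (Fin m → ZMod 2) → ℝ := fun z => p z - ((2:ℝ)^m)⁻¹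
  have hcard : (Finset.univ : Finset (Fin m → ZMod 2)).card = 2 ^ m := by simp
  have hq : walshTransform q 0 = 0 := by
    simp [q, walshTransform_zero, Finset.sum_sub_distrib, hsum, hcard]
  calc (∑ z, |q z|) ^ 2
      ≤ 2 ^ m * ∑ z, q z ^ 2 := by
        simpa [hcard] using sq_sum_le_card_mul_sum_sq (s := Finset.univ) (f := fun z => |q z|)
    _ = ∑ S, walshTransform q S ^ 2 := by simpa using (sum_sq_walshTransform q).symm
    _ = ∑ S with S ≠ 0, walshTransform q S ^ 2 :=
        (Finset.sum_filter_of_ne fun S _ hS => by rintro rfl; simp [hq] at hS).symm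
    _ = _ := Finset.sum_congr rfl fun S hS => by
        rw [walshTransform_sub_const (Finset.mem_filter.mp hS).2, ← sq_abs]
        exact congrArg (· ^ 2) (sum_abs_fiber_sub_half (S ⬝ᵥ ·) hsum).symm

/-- Vazirani's classical XOR-Lemma. -/
theorem stmt1 (m : ℕ) (p : (Fin m → ZMod 2) → ℝ) (hp : ∀ z, 0 ≤ p z) (hsum : ∑ z, p z = 1) :
    (∑ z, |p z - ((2:ℝ)^m)⁻¹|)^2 ≤
      ∑ S ∈ Finset.univ.filter (fun S : Fin m → ZMod 2 => S ≠ 0),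
        (∑ b : ZMod 2, |(∑ z ∈ Finset.univ.filter (fun z : Fin m → ZMod 2 => S ⬝ᵥ z = b), p z)
            - 2⁻¹|)^2 :=
  stmt1_general m p hsum
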